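/- Let A be a self-adjoint operator in H, α ≠ 0 real, V ≥ 0 bounded self-adjoint, z ∈ ρ(A), and suppose -1/α is not an eigenvalue of the compact operator K(z) = V^{1/2}(A - zI)⁻¹V^{1/2} and K(z) + α⁻¹I is boundedly invertible. Then z ∈ ρ(A + αV) and (A + αV - zI)⁻¹ = (A - zI)⁻¹ - (A - zI)⁻¹ V^{1/2} [K(z) + α⁻¹ I]⁻¹ V^{1/2} (A - zI)⁻¹. -/

import Mathlib

variable {H : Type*} [NormedAddCommGroup H] [InnerProductSpace ℂ H] [CompleteSpace H]

open ContinuousLinearMap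

/-- `R` is the (bounded, everywhere defined) resolvent `(A - z I)⁻¹` of `A` at `z`. -/
def IsResolvent (A : H →ₗ.[ℂ] H) (z : ℂ) (R : H →L[ℂ] H) : Prop :=
  (∀ f : H, ∃ hf : R f ∈ A.domain, A ⟨R f, hf⟩ - z • R f = f) ∧
  ∀ x : A.domain, R (A x - z • (x : H)) = x

/-! With `V = W²`, the operator `S = R - R W G W R` satisfies both second resolvent identities
`S = R - R (αV) S` and `S = R - S (αV) R`: this is pure algebra, using only that `G` inverts
`W R W + α⁻¹` on both sides. Any bounded `S` satisfying both identities inverts `A + αV - z`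
on the domain of `A`. -/

section BirmanSchwinger

variable {𝕜 M : Type*} [Field 𝕜] [Ring M] [Algebra 𝕜 M] {a : 𝕜} {R W G : M}

theorem birmanSchwinger_resolvent_identity_left (ha : a ≠ 0)
    (hG : (W * (R * W) + a⁻¹ • 1) * G = 1) :
    R * (a • (W * W)) * (R - R * (W * (G * (W * R)))) = R * (W * (G * (W * R))) := by
  have hKG : W * (R * W) * G = 1 - a⁻¹ • G := by
    rw [← hG, add_mul, smul_mul_assoc, one_mul, add_sub_cancel_right]
  calc R * (a • (W * W)) * (R - R * (W * (G * (W * R))))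
      = a • (R * W * (1 - W * (R * W) * G) * W * R) := by
        simp only [mul_sub, sub_mul, mul_one, mul_smul_comm, smul_mul_assoc, smul_sub, mul_assoc]
    _ = R * (W * (G * (W * R))) := by
        rw [hKG, sub_sub_cancel, mul_smul_comm, smul_mul_assoc, smul_mul_assoc, smul_smul,
          mul_inv_cancel₀ ha, one_smul]
        simp only [mul_assoc]

theorem birmanSchwinger_resolvent_identity_right (ha : a ≠ 0)
    (hG : G * (W * (R * W) + a⁻¹ • 1) = 1) :
    (R - R * (W * (G * (W * R)))) * (a • (W * W)) * R = R * (W * (G * (W * R))) := by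
  have hGK : G * (W * (R * W)) = 1 - a⁻¹ • G := by
    rw [← hG, mul_add, mul_smul_comm, mul_one, add_sub_cancel_right]
  calc (R - R * (W * (G * (W * R)))) * (a • (W * W)) * R
      = a • (R * W * (1 - G * (W * (R * W))) * W * R) := by
        simp only [mul_sub, sub_mul, mul_one, mul_smul_comm, smul_mul_assoc, smul_sub, mul_assoc]
    _ = R * (W * (G * (W * R))) := by
        rw [hGK, sub_sub_cancel, mul_smul_comm, smul_mul_assoc, smul_mul_assoc, smul_smul,
          mul_inv_cancel₀ ha, one_smul]
        simp only [mul_assoc]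

end BirmanSchwinger

section Resolvent

variable {E : Type*} [NormedAddCommGroup E] [InnerProductSpace ℂ E]
  {A : E →ₗ.[ℂ] E} {z : ℂ} {R : E →L[ℂ] E}

theorem IsResolvent.sub_smul_of_apply_eq (hR : IsResolvent A z R) {g y : E} (hy : y ∈ A.domain)
    (hRg : R g = y) : A ⟨y, hy⟩ - z • y = g := by
  subst hRg
  exact (hR.1 g).choose_spec

theorem IsResolvent.perturb_of_resolvent_identities {B S : E →L[ℂ] E} (hR : IsResolvent A z R)
    (hright : S = R - R * B * S) (hleft : S = R - S * B * R) :
    (∀ f : E, ∃ hf : S f ∈ A.domain, A ⟨S f, hf⟩ + B (S f) - z • S f = f) ∧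
      ∀ (x : E) (hx : x ∈ A.domain), S (A ⟨x, hx⟩ + B x - z • x) = x := by
  constructor
  · intro f
    have hSf : R (f - B (S f)) = S f := by
      nth_rewrite 2 [hright]
      rw [sub_apply, mul_apply_eq_comp, mul_apply_eq_comp, map_sub]
    have hmem : S f ∈ A.domain := hSf ▸ (hR.1 _).1
    refine ⟨hmem, ?_⟩
    rw [add_sub_right_comm, hR.sub_smul_of_apply_eq hmem hSf, sub_add_cancel]
  · intro x hx
    have hRx : R (A ⟨x, hx⟩ - z • x) = x := hR.2 ⟨x, hx⟩
    calc S (A ⟨x, hx⟩ + B x - z • x) = S (A ⟨x, hx⟩ - z • x) + S (B x) := by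
          rw [add_sub_right_comm, map_add]
      _ = R (A ⟨x, hx⟩ - z • x) - S (B (R (A ⟨x, hx⟩ - z • x))) + S (B x) := by
          nth_rewrite 1 [hleft]
          rw [sub_apply, mul_apply_eq_comp, mul_apply_eq_comp]
      _ = x := by rw [hRx, sub_add_cancel]

end Resolvent

theorem statement19_general (A : H →ₗ.[ℂ] H)
    (α : ℝ) (hα : α ≠ 0)
    (V W : H →L[ℂ] H) (hWV : W ∘L W = V)
    (z : ℂ) (RA : H →L[ℂ] H) (hRA : IsResolvent A z RA)
    (G : H →L[ℂ] H)
    (hG1 : (W ∘L RA ∘L W + ((α : ℂ))⁻¹ • ContinuousLinearMap.id ℂ H) ∘L G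
        = ContinuousLinearMap.id ℂ H)
    (hG2 : G ∘L (W ∘L RA ∘L W + ((α : ℂ))⁻¹ • ContinuousLinearMap.id ℂ H)
        = ContinuousLinearMap.id ℂ H) :
    (∀ f : H, ∃ hf : (RA - RA ∘L W ∘L G ∘L W ∘L RA) f ∈ A.domain,
        A ⟨(RA - RA ∘L W ∘L G ∘L W ∘L RA) f, hf⟩
            + (α : ℂ) • V ((RA - RA ∘L W ∘L G ∘L W ∘L RA) f)
            - z • (RA - RA ∘L W ∘L G ∘L W ∘L RA) f = f) ∧
      ∀ (x : H) (hx : x ∈ A.domain),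
        (RA - RA ∘L W ∘L G ∘L W ∘L RA) (A ⟨x, hx⟩ + (α : ℂ) • V x - z • x) = x := by
  subst hWV
  have hαℂ : (α : ℂ) ≠ 0 := by exact_mod_cast hα
  have hright := birmanSchwinger_resolvent_identity_left hαℂ hG1
  have hleft := birmanSchwinger_resolvent_identity_right hαℂ hG2
  exact hRA.perturb_of_resolvent_identities (B := (α : ℂ) • (W * W))
    (S := RA - RA * (W * (G * (W * RA)))) (by rw [hright]) (by rw [hleft])

/-- Birman–Schwinger resolvent formula: let `A` be self-adjoint, `α ≠ 0`, `V ≥ 0` bounded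
self-adjoint with square root `W = V^{1/2}`, `z ∈ ρ(A)`, and suppose `-1/α` is not an
eigenvalue of the compact operator `K(z) = W (A - z I)⁻¹ W` and `K(z) + α⁻¹ I` is
boundedly invertible, with inverse `G`.  Then `z ∈ ρ(A + αV)` and
`(A + αV - z I)⁻¹ = (A - z I)⁻¹ - (A - z I)⁻¹ W [K(z) + α⁻¹ I]⁻¹ W (A - z I)⁻¹`. -/
theorem statement19 (A : H →ₗ.[ℂ] H) (hA : IsSelfAdjoint A)
    (α : ℝ) (hα : α ≠ 0)
    (V W : H →L[ℂ] H) (hV : V.IsPositive) (hW : W.IsPositive) (hWV : W ∘L W = V)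
    (z : ℂ) (RA : H →L[ℂ] H) (hRA : IsResolvent A z RA)
    (hKcpt : IsCompactOperator ⇑(W ∘L RA ∘L W))
    (hnoev : ∀ x : H, (W ∘L RA ∘L W) x = ((-(1 / α) : ℝ) : ℂ) • x → x = 0)
    (G : H →L[ℂ] H)
    (hG1 : (W ∘L RA ∘L W + ((α : ℂ))⁻¹ • ContinuousLinearMap.id ℂ H) ∘L G
        = ContinuousLinearMap.id ℂ H)
    (hG2 : G ∘L (W ∘L RA ∘L W + ((α : ℂ))⁻¹ • ContinuousLinearMap.id ℂ H)
        = ContinuousLinearMap.id ℂ H) :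
    (∀ f : H, ∃ hf : (RA - RA ∘L W ∘L G ∘L W ∘L RA) f ∈ A.domain,
        A ⟨(RA - RA ∘L W ∘L G ∘L W ∘L RA) f, hf⟩
            + (α : ℂ) • V ((RA - RA ∘L W ∘L G ∘L W ∘L RA) f)
            - z • (RA - RA ∘L W ∘L G ∘L W ∘L RA) f = f) ∧
      ∀ (x : H) (hx : x ∈ A.domain),
        (RA - RA ∘L W ∘L G ∘L W ∘L RA) (A ⟨x, hx⟩ + (α : ℂ) • V x - z • x) = x :=
  statement19_general A α hα V W hWV z RA hRA G hG1 hG2
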